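/- Let A₁ = [G₁ | t₁] and A₂ = [G₂ | t₂] be finite cameras with distinct centers c₁, c₂. Fix q ∈ ℝ⁴ ∖ {0} not proportional to c₁ or c₂, and write A_i·q = λ_i·p_i with p_i ∈ ℝ³ ∖ {0}. Set a_i = G_i⁻¹p_i and b₁₂ = G₁⁻¹t₁ − G₂⁻¹t₂. Then the three vectors a₁, a₂, b₁₂ are collinear in ℝ³ (i.e., pairwise linearly dependent) if and only if q lies on the baseline, i.e., q is a linear combination of c₁ and c₂. In that case p₁ is proportional to the epipole e₁₂ = A₁c₂ and p₂ is proportional to the epipole e₂₁ = A₂c₁. -/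

import Mathlib

open Matrix

noncomputable section

/-- Left 3x3 block `G` of a 3x4 camera matrix `A = [G | t]`. -/
def leftBlock (A : Matrix (Fin 3) (Fin 4) ℝ) : Matrix (Fin 3) (Fin 3) ℝ :=
  Matrix.of fun i j => A i j.castSucc

/-- Last column `t` of a 3x4 camera matrix `A = [G | t]`. -/
def tCol (A : Matrix (Fin 3) (Fin 4) ℝ) : Fin 3 → ℝ := fun i => A i 3

/-- A camera is finite if its left 3x3 block is invertible. -/
def FiniteCam (A : Matrix (Fin 3) (Fin 4) ℝ) : Prop := (leftBlock A).det ≠ 0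

/-- The center `(-G⁻¹ t, 1)` of a finite camera. -/
def camCenter (A : Matrix (Fin 3) (Fin 4) ℝ) : Fin 4 → ℝ :=
  Fin.snoc (-((leftBlock A)⁻¹ *ᵥ tCol A)) 1

/-- The principal ray `det G • (third row of A)`. -/
def principalRay (A : Matrix (Fin 3) (Fin 4) ℝ) : Fin 4 → ℝ :=
  (leftBlock A).det • A 2

/-- `n_∞ = (0,0,0,1)`. -/
def nInf : Fin 4 → ℝ := Fin.snoc (0 : Fin 3 → ℝ) 1

/-- The chiral domain `D_𝒜`: the closure, within `ℝ⁴ ∖ {0}` (i.e. ambient closure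
intersected with `ℝ⁴ ∖ {0}`), of the set of finite vectors (last coordinate nonzero)
having positive depth in every camera of the arrangement. -/
def chiralDomain {m : ℕ} (A : Fin m → Matrix (Fin 3) (Fin 4) ℝ) : Set (Fin 4 → ℝ) :=
  closure {q : Fin 4 → ℝ | nInf ⬝ᵥ q ≠ 0 ∧ ∀ i, 0 < (principalRay (A i) ⬝ᵥ q) * (nInf ⬝ᵥ q)}
    ∩ {q : Fin 4 → ℝ | q ≠ 0}

/-! Write `q = (x, w)` and `uᵢ = Gᵢ⁻¹ tᵢ`, so that `cᵢ = (-uᵢ, 1)`. Applying `Gᵢ⁻¹` to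
`Aᵢ q = λᵢ pᵢ` gives `λᵢ aᵢ = x + w uᵢ`, where `λᵢ ≠ 0` because the kernel of `Aᵢ` is spanned
by `cᵢ`. As `b₁₂ = u₁ - u₂ ≠ 0` and `x + w u₂ = x + w u₁ - w b₁₂`, the vectors `a₁, a₂, b₁₂`
are collinear exactly when `x + w u₁ ∈ ℝ b₁₂`, which is the condition for `(x, w)` to be a
combination of `(-u₁, 1)` and `(-u₂, 1)`. On the baseline, `q = α c₁ + β c₂` and `A₁ c₁ = 0`
give `λ₁ p₁ = β e₁₂`, with `β ≠ 0` since `q` is not a multiple of `c₁`. -/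

theorem Fin.smul_snoc {R M : Type*} [SMul R M] {n : ℕ} (c : R) (v : Fin n → M) (a : M) :
    c • (Fin.snoc v a : Fin (n + 1) → M) = Fin.snoc (c • v) (c • a) := by
  ext i
  refine Fin.lastCases ?_ (fun j => ?_) i <;> simp

theorem Fin.snoc_add_snoc {M : Type*} [Add M] {n : ℕ} (v v' : Fin n → M) (a a' : M) :
    (Fin.snoc v a : Fin (n + 1) → M) + Fin.snoc v' a' = Fin.snoc (v + v') (a + a') := by
  ext i
  refine Fin.lastCases ?_ (fun j => ?_) i <;> simp

theorem cross_eq_zero_iff_mem_span_singleton {F : Type*} [Field F] {a b : Fin 3 → F}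
    (hb : b ≠ 0) : a ⨯₃ b = 0 ↔ a ∈ F ∙ b := by
  rw [← neg_eq_zero, cross_anticomm, ← not_ne_iff, crossProduct_ne_zero_iff_linearIndependent,
    LinearIndependent.pair_iff' hb, Submodule.mem_span_singleton]
  push Not
  rfl

theorem cross_eq_zero_of_mem_span_singleton {R : Type*} [CommRing R] {a a' b : Fin 3 → R}
    (ha : a ∈ R ∙ b) (ha' : a' ∈ R ∙ b) : a ⨯₃ a' = 0 := by
  obtain ⟨s, rfl⟩ := Submodule.mem_span_singleton.1 ha
  obtain ⟨t, rfl⟩ := Submodule.mem_span_singleton.1 ha'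
  simp [cross_self]

theorem exists_snoc_eq_smul_add_smul_iff {R : Type*} [CommRing R] {n : ℕ}
    (u₁ u₂ x : Fin n → R) (w : R) :
    (∃ α β : R, (Fin.snoc x w : Fin (n + 1) → R) =
        α • Fin.snoc (-u₁) 1 + β • Fin.snoc (-u₂) 1) ↔
      x + w • u₁ ∈ R ∙ (u₁ - u₂) := by
  simp only [Fin.smul_snoc, Fin.snoc_add_snoc, Fin.snoc_inj, smul_eq_mul, mul_one,
    Submodule.mem_span_singleton]
  constructor
  · rintro ⟨α, β, rfl, rfl⟩
    exact ⟨β, by module⟩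
  · rintro ⟨s, hs⟩
    refine ⟨w - s, s, ?_, by ring⟩
    rw [eq_sub_of_add_eq hs.symm]
    module

theorem mulVec_snoc (A : Matrix (Fin 3) (Fin 4) ℝ) (v : Fin 3 → ℝ) (w : ℝ) :
    A *ᵥ (Fin.snoc v w : Fin 4 → ℝ) = leftBlock A *ᵥ v + w • tCol A := by
  ext i
  simp only [mulVec, dotProduct, Pi.add_apply, Pi.smul_apply, smul_eq_mul]
  rw [Fin.sum_univ_castSucc, mul_comm w]
  simp only [Fin.snoc_castSucc, Fin.snoc_last, leftBlock, tCol, of_apply]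
  rfl

theorem inv_leftBlock_mulVec_mulVec_snoc {A : Matrix (Fin 3) (Fin 4) ℝ} (hA : FiniteCam A)
    (x : Fin 3 → ℝ) (w : ℝ) :
    (leftBlock A)⁻¹ *ᵥ (A *ᵥ Fin.snoc x w) = x + w • ((leftBlock A)⁻¹ *ᵥ tCol A) := by
  rw [mulVec_snoc, mulVec_add, mulVec_smul, mulVec_mulVec, nonsing_inv_mul _ hA.isUnit,
    one_mulVec]

theorem mulVec_camCenter {A : Matrix (Fin 3) (Fin 4) ℝ} (hA : FiniteCam A) :
    A *ᵥ camCenter A = 0 := by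
  rw [camCenter, mulVec_snoc, mulVec_neg, mulVec_mulVec, mul_nonsing_inv _ hA.isUnit,
    one_mulVec, one_smul, neg_add_cancel]

theorem mulVec_eq_zero_iff_exists_smul_camCenter {A : Matrix (Fin 3) (Fin 4) ℝ}
    (hA : FiniteCam A) (q : Fin 4 → ℝ) : A *ᵥ q = 0 ↔ ∃ c : ℝ, q = c • camCenter A := by
  constructor
  · intro hq
    refine ⟨q (Fin.last 3), ?_⟩
    have hx := inv_leftBlock_mulVec_mulVec_snoc hA (Fin.init q) (q (Fin.last 3))
    rw [Fin.snoc_init_self, hq, mulVec_zero, eq_comm, add_eq_zero_iff_eq_neg] at hx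
    rw [camCenter, Fin.smul_snoc, smul_neg, ← hx, smul_eq_mul, mul_one, Fin.snoc_init_self]
  · rintro ⟨c, rfl⟩
    rw [mulVec_smul, mulVec_camCenter hA, smul_zero]

theorem inv_leftBlock_mulVec_mem_iff {A : Matrix (Fin 3) (Fin 4) ℝ} (hA : FiniteCam A)
    {x p : Fin 3 → ℝ} {w lam : ℝ} (him : A *ᵥ Fin.snoc x w = lam • p) (hlam : lam ≠ 0)
    (L : Submodule ℝ (Fin 3 → ℝ)) :
    (leftBlock A)⁻¹ *ᵥ p ∈ L ↔ x + w • ((leftBlock A)⁻¹ *ᵥ tCol A) ∈ L := by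
  rw [← L.smul_mem_iff hlam, ← mulVec_smul, ← him, inv_leftBlock_mulVec_mulVec_snoc hA]

theorem ne_zero_of_mulVec_eq_smul {A : Matrix (Fin 3) (Fin 4) ℝ} (hA : FiniteCam A)
    {q : Fin 4 → ℝ} {lam : ℝ} {p : Fin 3 → ℝ} (him : A *ᵥ q = lam • p)
    (hq : ¬ ∃ c : ℝ, q = c • camCenter A) : lam ≠ 0 := by
  rintro rfl
  exact hq ((mulVec_eq_zero_iff_exists_smul_camCenter hA q).1 (by rw [him, zero_smul]))

theorem exists_eq_smul_mulVec_of_eq_smul_camCenter_add {A : Matrix (Fin 3) (Fin 4) ℝ}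
    (hA : FiniteCam A) {q c : Fin 4 → ℝ} {lam α β : ℝ} {p : Fin 3 → ℝ}
    (him : A *ᵥ q = lam • p) (hlam : lam ≠ 0) (hq : q = α • camCenter A + β • c)
    (hβ : β ≠ 0) : ∃ k : ℝ, k ≠ 0 ∧ p = k • (A *ᵥ c) := by
  refine ⟨lam⁻¹ * β, mul_ne_zero (inv_ne_zero hlam) hβ, ?_⟩
  rw [← smul_smul, ← mulVec_smul, ← zero_add (A *ᵥ (β • c)), ← smul_zero α,
    ← mulVec_camCenter hA, ← mulVec_smul, ← mulVec_add, ← hq, him, inv_smul_smul₀ hlam]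

theorem collinear_iff_on_baseline_general
    (A₁ A₂ : Matrix (Fin 3) (Fin 4) ℝ)
    (h₁ : FiniteCam A₁) (h₂ : FiniteCam A₂)
    (hdist : camCenter A₁ ≠ camCenter A₂)
    (q : Fin 4 → ℝ)
    (hqc₁ : ¬ ∃ c : ℝ, q = c • camCenter A₁)
    (hqc₂ : ¬ ∃ c : ℝ, q = c • camCenter A₂)
    (lam₁ lam₂ : ℝ) (p₁ p₂ : Fin 3 → ℝ)
    (him₁ : A₁ *ᵥ q = lam₁ • p₁) (him₂ : A₂ *ᵥ q = lam₂ • p₂) :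
    ((((leftBlock A₁)⁻¹ *ᵥ p₁) ⨯₃ ((leftBlock A₂)⁻¹ *ᵥ p₂) = 0 ∧
      (((leftBlock A₁)⁻¹ *ᵥ p₁) ⨯₃
        ((leftBlock A₁)⁻¹ *ᵥ tCol A₁ - (leftBlock A₂)⁻¹ *ᵥ tCol A₂) = 0) ∧
      (((leftBlock A₂)⁻¹ *ᵥ p₂) ⨯₃
        ((leftBlock A₁)⁻¹ *ᵥ tCol A₁ - (leftBlock A₂)⁻¹ *ᵥ tCol A₂) = 0)) ↔
      ∃ α β : ℝ, q = α • camCenter A₁ + β • camCenter A₂) ∧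
    ((∃ α β : ℝ, q = α • camCenter A₁ + β • camCenter A₂) →
      (∃ c : ℝ, c ≠ 0 ∧ p₁ = c • (A₁ *ᵥ camCenter A₂)) ∧
      (∃ c : ℝ, c ≠ 0 ∧ p₂ = c • (A₂ *ᵥ camCenter A₁))) := by
  have hlam₁ := ne_zero_of_mulVec_eq_smul h₁ him₁ hqc₁
  have hlam₂ := ne_zero_of_mulVec_eq_smul h₂ him₂ hqc₂
  refine ⟨?_, fun ⟨α, β, hline⟩ => ⟨?_, ?_⟩⟩
  · set u₁ := (leftBlock A₁)⁻¹ *ᵥ tCol A₁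
    set u₂ := (leftBlock A₂)⁻¹ *ᵥ tCol A₂
    set L := ℝ ∙ (u₁ - u₂)
    have hb : u₁ - u₂ ≠ 0 := fun h =>
      hdist (congrArg (fun u => (Fin.snoc (-u) 1 : Fin 4 → ℝ)) (sub_eq_zero.1 h))
    obtain ⟨x, w, rfl⟩ : ∃ x w, q = Fin.snoc x w := ⟨_, _, (Fin.snoc_init_self q).symm⟩
    have ha₁ := inv_leftBlock_mulVec_mem_iff h₁ him₁ hlam₁ L
    have ha₂ : (leftBlock A₂)⁻¹ *ᵥ p₂ ∈ L ↔ x + w • u₁ ∈ L := by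
      rw [inv_leftBlock_mulVec_mem_iff h₂ him₂ hlam₂ L,
        show x + w • u₂ = x + w • u₁ - w • (u₁ - u₂) by module,
        L.sub_mem_iff_left (L.smul_mem w (Submodule.mem_span_singleton_self _))]
    have hbase : (∃ α β : ℝ, Fin.snoc x w = α • camCenter A₁ + β • camCenter A₂) ↔
        x + w • u₁ ∈ L :=
      exists_snoc_eq_smul_add_smul_iff u₁ u₂ x w
    rw [cross_eq_zero_iff_mem_span_singleton hb, cross_eq_zero_iff_mem_span_singleton hb, ha₁,
      ha₂, hbase]
    exact ⟨fun h => h.2.1,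
      fun h => ⟨cross_eq_zero_of_mem_span_singleton (ha₁.2 h) (ha₂.2 h), h, h⟩⟩
  · refine exists_eq_smul_mulVec_of_eq_smul_camCenter_add h₁ him₁ hlam₁ hline ?_
    rintro rfl
    exact hqc₁ ⟨α, by simpa using hline⟩
  · refine exists_eq_smul_mulVec_of_eq_smul_camCenter_add h₂ him₂ hlam₂
      (by rw [hline, add_comm]) ?_
    rintro rfl
    exact hqc₂ ⟨β, by simpa using hline⟩

/-- for two finite cameras with distinct centers and `q` not proportional to
either center, writing `A_i q = λ_i p_i` with `p_i ≠ 0`, `a_i = G_i⁻¹ p_i` and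
`b₁₂ = G₁⁻¹t₁ − G₂⁻¹t₂`, the vectors `a₁, a₂, b₁₂` are pairwise linearly dependent
(equivalently, their pairwise cross products vanish) iff `q` lies on the baseline; in that
case `p₁` is proportional to the epipole `e₁₂ = A₁c₂` and `p₂` to `e₂₁ = A₂c₁`. -/
theorem collinear_iff_on_baseline
    (A₁ A₂ : Matrix (Fin 3) (Fin 4) ℝ)
    (h₁ : FiniteCam A₁) (h₂ : FiniteCam A₂)
    (hdist : camCenter A₁ ≠ camCenter A₂)
    (q : Fin 4 → ℝ) (hq : q ≠ 0)
    (hqc₁ : ¬ ∃ c : ℝ, q = c • camCenter A₁)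
    (hqc₂ : ¬ ∃ c : ℝ, q = c • camCenter A₂)
    (lam₁ lam₂ : ℝ) (p₁ p₂ : Fin 3 → ℝ) (hp₁ : p₁ ≠ 0) (hp₂ : p₂ ≠ 0)
    (him₁ : A₁ *ᵥ q = lam₁ • p₁) (him₂ : A₂ *ᵥ q = lam₂ • p₂) :
    ((((leftBlock A₁)⁻¹ *ᵥ p₁) ⨯₃ ((leftBlock A₂)⁻¹ *ᵥ p₂) = 0 ∧
      (((leftBlock A₁)⁻¹ *ᵥ p₁) ⨯₃
        ((leftBlock A₁)⁻¹ *ᵥ tCol A₁ - (leftBlock A₂)⁻¹ *ᵥ tCol A₂) = 0) ∧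
      (((leftBlock A₂)⁻¹ *ᵥ p₂) ⨯₃
        ((leftBlock A₁)⁻¹ *ᵥ tCol A₁ - (leftBlock A₂)⁻¹ *ᵥ tCol A₂) = 0)) ↔
      ∃ α β : ℝ, q = α • camCenter A₁ + β • camCenter A₂) ∧
    ((∃ α β : ℝ, q = α • camCenter A₁ + β • camCenter A₂) →
      (∃ c : ℝ, c ≠ 0 ∧ p₁ = c • (A₁ *ᵥ camCenter A₂)) ∧
      (∃ c : ℝ, c ≠ 0 ∧ p₂ = c • (A₂ *ᵥ camCenter A₁))) :=
  collinear_iff_on_baseline_general A₁ A₂ h₁ h₂ hdist q hqc₁ hqc₂ lam₁ lam₂ p₁ p₂ him₁ him₂
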